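/- Let I be an artinian monomial ideal in R = k[x_1,…,x_n]. A monomial X^ν lies outside I if and only if there exists a maximal corner μ of I such that X^ν divides X^{low(μ)}, i.e. ν_i ≤ low(μ)_i for all i. (In other words, the standard monomials of I are exactly the divisors of the monomials X^{low(μ)} with μ a maximal corner, which yields the Stanley decomposition R/I = ⊕ k·X^ν over such divisors.) -/
import Mathlib


open MvPolynomial

/-- The monomial `X^ν = ∏ i, x_i ^ ν i` in `k[x_1, …, x_n]`. -/
noncomputable def Xpow (k : Type) [Field k] (n : ℕ) (ν : Fin n → ℕ) :
    MvPolynomial (Fin n) k :=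
  ∏ i, X i ^ ν i

/-- The lowered multidegree: subtract one from every entry (truncated at 0). -/
def low {n : ℕ} (μ : Fin n → ℕ) : Fin n → ℕ := fun i => μ i - 1

/-- The irreducible monomial ideal `m^μ = ⟨x_i^{μ_i} : μ_i ≠ 0⟩`. -/
noncomputable def mIdeal (k : Type) [Field k] (n : ℕ) (μ : Fin n → ℕ) :
    Ideal (MvPolynomial (Fin n) k) :=
  Ideal.span ((fun i => (X i : MvPolynomial (Fin n) k) ^ μ i) '' {i | μ i ≠ 0})

/-- A monomial ideal: an ideal generated by a set of monomials. -/
def IsMonomialIdeal {k : Type} [Field k] {n : ℕ}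
    (I : Ideal (MvPolynomial (Fin n) k)) : Prop :=
  ∃ S : Set (Fin n → ℕ), I = Ideal.span (Xpow k n '' S)

/-- `μ` is a maximal corner of `I`: `μ` has full support, `x_i · X^{low μ} ∈ I`
for every `i`, and `X^{low μ} ∉ I`. -/
def IsMaximalCorner {k : Type} [Field k] {n : ℕ}
    (I : Ideal (MvPolynomial (Fin n) k)) (μ : Fin n → ℕ) : Prop :=
  (∀ i, μ i ≠ 0) ∧
    (∀ i, (X i : MvPolynomial (Fin n) k) * Xpow k n (low μ) ∈ I) ∧
    Xpow k n (low μ) ∉ I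

lemma Xpow_eq_monomial (k : Type) [Field k] (n : ℕ) (ν : Fin n → ℕ) :
    Xpow k n ν = monomial (Finsupp.equivFunOnFinite.symm ν) 1 := by
  rw [Xpow, ← prod_X_pow_eq_monomial]
  refine (Finset.prod_subset (Finset.subset_univ _) ?_).symm
  intro i _ hi
  simp only [Finsupp.mem_support_iff, ne_eq, not_not] at hi
  show X i ^ ν i = 1
  simp [show ν i = 0 from hi]

lemma Xpow_add (k : Type) [Field k] (n : ℕ) (a b : Fin n → ℕ) :
    Xpow k n (a + b) = Xpow k n a * Xpow k n b := by
  simp [Xpow, pow_add, Finset.prod_mul_distrib]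

lemma Xpow_mem_iff (k : Type) [Field k] (n : ℕ) (S : Set (Fin n → ℕ)) (ν : Fin n → ℕ) :
    Xpow k n ν ∈ Ideal.span (Xpow k n '' S) ↔ ∃ σ ∈ S, ∀ i, σ i ≤ ν i := by
  have himg : Xpow k n '' S
      = (fun s => monomial s (1 : k)) '' (Finsupp.equivFunOnFinite.symm '' S) := by
    rw [Set.image_image]
    exact Set.image_congr fun a _ => Xpow_eq_monomial k n a
  classical
  rw [Xpow_eq_monomial, himg, mem_ideal_span_monomial_image]
  constructor
  · intro h
    have := h (Finsupp.equivFunOnFinite.symm ν) (by simp [support_monomial])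
    obtain ⟨si, ⟨σ, hσS, rfl⟩, hle⟩ := this
    exact ⟨σ, hσS, fun i => hle i⟩
  · rintro ⟨σ, hσS, hle⟩ xi hxi
    rw [support_monomial, if_neg one_ne_zero, Finset.mem_singleton] at hxi
    subst hxi
    exact ⟨_, ⟨σ, hσS, rfl⟩, fun i => hle i⟩

lemma Xpow_single (k : Type) [Field k] (n : ℕ) (i : Fin n) (c : ℕ) :
    Xpow k n (fun j => if j = i then c else 0) = X i ^ c := by
  rw [Xpow]
  rw [Finset.prod_eq_single_of_mem i (Finset.mem_univ i) (fun j _ hj => by simp [hj])]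
  simp

/-- For an artinian monomial ideal `I`, a monomial `X^ν` is a
standard monomial (lies outside `I`) iff it divides `X^{low μ}` for some
maximal corner `μ` of `I`. -/
theorem stmt5 (k : Type) [Field k] (n : ℕ) (I : Ideal (MvPolynomial (Fin n) k))
    (hmon : IsMonomialIdeal I)
    (hart : ∀ i : Fin n, ∃ a : ℕ, (X i : MvPolynomial (Fin n) k) ^ a ∈ I)
    (ν : Fin n → ℕ) :
    Xpow k n ν ∉ I ↔ ∃ μ : Fin n → ℕ, IsMaximalCorner I μ ∧ ∀ i, ν i ≤ low μ i := by
  classical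
  obtain ⟨S, hS⟩ := hmon
  subst hS
  set I := Ideal.span (Xpow k n '' S) with hI
  have memI : ∀ τ : Fin n → ℕ, Xpow k n τ ∈ I ↔ ∃ σ ∈ S, ∀ i, σ i ≤ τ i :=
    Xpow_mem_iff k n S
  constructor
  · intro hν
    -- bounds from artinianity
    choose a ha using hart
    have hbound : ∀ τ : Fin n → ℕ, Xpow k n τ ∉ I → ∀ i, τ i < a i := by
      intro τ hτ i
      by_contra hcon
      push_neg at hcon
      have : Xpow k n (fun j => if j = i then a i else 0) ∈ I := by
        rw [Xpow_single]; exact ha i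
      obtain ⟨σ, hσS, hσle⟩ := (memI _).1 this
      refine hτ ((memI τ).2 ⟨σ, hσS, fun j => ?_⟩)
      have := hσle j
      by_cases hj : j = i
      · subst hj; simpa using le_trans (by simpa using this) hcon
      · simp [hj] at this; omega
    -- maximize the sum over standard monomials above ν
    set T : Set (Fin n → ℕ) := {τ | (∀ i, ν i ≤ τ i) ∧ Xpow k n τ ∉ I} with hT
    have hνT : ν ∈ T := ⟨fun i => le_refl _, hν⟩
    set B : ℕ := ∑ i, a i with hB
    have hsumB : ∀ τ ∈ T, ∑ i, τ i ≤ B := by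
      intro τ hτ
      exact Finset.sum_le_sum fun i _ => le_of_lt (hbound τ hτ.2 i)
    set P : ℕ → Prop := fun s => ∃ τ ∈ T, ∑ i, τ i = s with hP
    have hPν : P (∑ i, ν i) := ⟨ν, hνT, rfl⟩
    have hspec : P (Nat.findGreatest P B) :=
      Nat.findGreatest_spec (hsumB ν hνT) hPν
    obtain ⟨τ, hτT, hτsum⟩ := hspec
    refine ⟨fun i => τ i + 1, ⟨fun i => Nat.succ_ne_zero _, fun i => ?_, ?_⟩, fun i => ?_⟩
    · -- x_i * X^τ ∈ I
      have hlow : low (fun i => τ i + 1) = τ := funext fun i => by simp [low]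
      rw [hlow]
      set τ' : Fin n → ℕ := fun j => τ j + (if j = i then 1 else 0) with hτ'
      have hXτ' : Xpow k n τ' = Xpow k n τ * (X i : MvPolynomial (Fin n) k) := by
        have : τ' = τ + fun j => if j = i then 1 else 0 := rfl
        rw [this, Xpow_add, Xpow_single, pow_one]
      by_cases hmem : Xpow k n τ' ∈ I
      · rw [hXτ', mul_comm] at hmem; exact hmem
      · exfalso
        have hτ'T : τ' ∈ T := ⟨fun j => le_trans (hτT.1 j) (Nat.le_add_right _ _), hmem⟩
        have hsum' : ∑ j, τ' j = Nat.findGreatest P B + 1 := by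
          rw [hτ']
          rw [Finset.sum_add_distrib, hτsum]
          congr 1
          simp
        exact Nat.findGreatest_is_greatest (P := P) (by omega : Nat.findGreatest P B < _)
          (hsum' ▸ hsumB τ' hτ'T) ⟨τ', hτ'T, hsum'⟩
    · have hlow : low (fun i => τ i + 1) = τ := funext fun i => by simp [low]
      rw [hlow]; exact hτT.2
    · have : low (fun i => τ i + 1) i = τ i := by simp [low]
      rw [this]; exact hτT.1 i
  · rintro ⟨μ, ⟨hfull, hxi, hnot⟩, hle⟩ hmem
    apply hnot
    have heq : (ν + fun i => low μ i - ν i) = low μ :=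
      funext fun i => Nat.add_sub_cancel' (hle i)
    have := Ideal.mul_mem_right (Xpow k n (fun i => low μ i - ν i)) _ hmem
    rwa [← Xpow_add, heq] at this
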